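/- For distinct points z¹, …, zⁿ ∈ ℂᵐ, the n×n matrix with entries exp(i Im(zʲ · conj(zᵏ)) − (1/2)|zʲ − zᵏ|²) has determinant e^{−Σ_j |zʲ|²} · det(exp(zʲ · conj(zᵏ))), and this determinant is nonzero. -/

import Mathlib

open scoped ComplexConjugate

namespace ScaledGram

lemma cexp_tsum (x : ℂ) : Complex.exp x = ∑' nn : ℕ, x ^ nn / (Nat.factorial nn : ℂ) := by
  rw [Complex.exp_eq_exp_ℂ, NormedSpace.exp_eq_tsum_div]

lemma summable_norm_pow_div_factorial (x : ℂ) :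
    Summable fun nn : ℕ => ‖x ^ nn / (Nat.factorial nn : ℂ)‖ := by
  simpa [norm_div, norm_pow] using Real.summable_pow_div_factorial ‖x‖

set_option maxHeartbeats 1000000 in
lemma prod_tsum {m : ℕ} (f : Fin m → ℕ → ℂ) (hf : ∀ l, Summable fun nn => ‖f l nn‖) :
    Summable (fun α : Fin m → ℕ => ‖∏ l, f l (α l)‖) ∧
    ∏ l, ∑' nn, f l nn = ∑' α : Fin m → ℕ, ∏ l, f l (α l) := by
  induction m with
  | zero =>
    constructor
    · exact .of_finite
    · have h1 : ∀ α : Fin 0 → ℕ, (∏ l, f l (α l)) = 1 := fun α => by simp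
      rw [tsum_congr h1, tsum_const]
      simp [Nat.card_unique]
  | succ m ih =>
    obtain ⟨ihs, ihe⟩ := ih (fun l => f l.succ) (fun l => hf l.succ)
    have hmul : Summable (fun p : ℕ × (Fin m → ℕ) => ‖f 0 p.1 * ∏ l, f l.succ (p.2 l)‖) := by
      have h5 := Summable.mul_norm (hf 0) ihs
      exact h5
    set e : (ℕ × (Fin m → ℕ)) ≃ (Fin (m + 1) → ℕ) := Fin.consEquiv (fun _ => ℕ) with he
    have hcomp : ∀ p : ℕ × (Fin m → ℕ),
        (∏ l, f l ((e p) l)) = f 0 p.1 * ∏ l, f l.succ (p.2 l) := by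
      intro p
      rw [Fin.prod_univ_succ]
      simp [he, Fin.consEquiv]
    constructor
    · rw [← e.summable_iff]
      exact hmul.congr fun p => by simp only [Function.comp_apply, hcomp p]
    · rw [Fin.prod_univ_succ, ihe, tsum_mul_tsum_of_summable_norm (hf 0) ihs, ← e.tsum_eq]
      exact tsum_congr fun p => (hcomp p).symm

lemma sep {n m : ℕ} (z : Fin n → Fin m → ℂ) (hz : Function.Injective z) (c : Fin n → ℂ)
    (h : ∀ α : Fin m → ℕ, ∑ j, c j * ∏ l, z j l ^ α l = 0) : c = 0 := by
  have hpoly : ∀ p : MvPolynomial (Fin m) ℂ,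
      ∑ j, c j * MvPolynomial.eval (z j) p = 0 := by
    intro p
    have heval : ∀ j, MvPolynomial.eval (z j) p
        = ∑ d ∈ p.support, MvPolynomial.coeff d p * ∏ i, z j i ^ d i := fun j =>
      MvPolynomial.eval_eq' (z j) p
    simp_rw [heval, Finset.mul_sum]
    rw [Finset.sum_comm]
    refine Finset.sum_eq_zero fun d _ => ?_
    calc ∑ j, c j * (MvPolynomial.coeff d p * ∏ i, z j i ^ d i)
        = MvPolynomial.coeff d p * ∑ j, c j * ∏ i, z j i ^ d i := by
          rw [Finset.mul_sum]; exact Finset.sum_congr rfl fun j _ => by ring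
      _ = 0 := by rw [h (fun i => d i), mul_zero]
  funext j₀
  have hex : ∀ k : {x : Fin n // x ∈ Finset.univ.erase j₀}, ∃ lk : Fin m,
      z j₀ lk ≠ z (k : Fin n) lk := by
    rintro ⟨k, hk⟩
    have hkj : k ≠ j₀ := (Finset.mem_erase.mp hk).1
    have hne : z j₀ ≠ z k := fun hzz => hkj (hz hzz).symm
    exact Function.ne_iff.mp hne
  choose l hl using hex
  set p : MvPolynomial (Fin m) ℂ :=
    ∏ k ∈ (Finset.univ.erase j₀).attach,
      (MvPolynomial.X (l k) - MvPolynomial.C (z (k : Fin n) (l k))) with hp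
  have hev : ∀ j, MvPolynomial.eval (z j) p
      = ∏ k ∈ (Finset.univ.erase j₀).attach, (z j (l k) - z (k : Fin n) (l k)) := by
    intro j; simp [hp]
  have hsum := hpoly p
  rw [Finset.sum_eq_single j₀ ?_ (fun hmem => absurd (Finset.mem_univ j₀) hmem)] at hsum
  · have hne : MvPolynomial.eval (z j₀) p ≠ 0 := by
      rw [hev]
      exact Finset.prod_ne_zero_iff.mpr fun k _ => sub_ne_zero.mpr (hl k)
    simpa using (mul_eq_zero.mp hsum).resolve_right hne
  · intro b _ hb
    have hbmem : b ∈ Finset.univ.erase j₀ := Finset.mem_erase.mpr ⟨hb, Finset.mem_univ b⟩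
    have hz0 : MvPolynomial.eval (z b) p = 0 := by
      rw [hev]
      exact Finset.prod_eq_zero (Finset.mem_attach _ ⟨b, hbmem⟩) (by simp)
    rw [hz0, mul_zero]

lemma gram_det_ne_zero {n m : ℕ} (z : Fin n → Fin m → ℂ) (hz : Function.Injective z) :
    (Matrix.of fun j k : Fin n =>
      Complex.exp (∑ l, z j l * conj (z k l))).det ≠ 0 := by
  intro hdet
  obtain ⟨v, hv, hMv⟩ := (Matrix.exists_mulVec_eq_zero_iff).mpr hdet
  apply hv
  set c : Fin n → ℂ := fun j => conj (v j) with hc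
  set t : Fin n → Fin n → (Fin m → ℕ) → ℂ :=
    fun j k α => ∏ l, (z j l * conj (z k l)) ^ (α l) / (Nat.factorial (α l) : ℂ) with ht
  have hexp : ∀ j k, Complex.exp (∑ l, z j l * conj (z k l)) = ∑' α, t j k α := by
    intro j k
    rw [Complex.exp_sum]
    have h2 := (prod_tsum
      (fun l nn => (z j l * conj (z k l)) ^ nn / (Nat.factorial nn : ℂ))
      (fun l => summable_norm_pow_div_factorial _)).2
    rw [ht]
    rw [← h2]
    exact Finset.prod_congr rfl fun l _ => cexp_tsum _
  have htsummable : ∀ j k, Summable fun α => ‖t j k α‖ := by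
    intro j k
    rw [ht]
    exact (prod_tsum
      (fun l nn => (z j l * conj (z k l)) ^ nn / (Nat.factorial nn : ℂ))
      (fun l => summable_norm_pow_div_factorial _)).1
  set b : (Fin m → ℕ) → ℂ := fun α => ∑ j, c j * ∏ l, z j l ^ (α l) with hb
  set w : (Fin m → ℕ) → ℝ := fun α => ∏ l, ((Nat.factorial (α l)) : ℝ) with hw
  set r : (Fin m → ℕ) → ℝ := fun α => Complex.normSq (b α) / w α with hr
  have hwpos : ∀ α, 0 < w α := by
    intro α
    rw [hw]
    exact Finset.prod_pos fun l _ => Nat.cast_pos.mpr (Nat.factorial_pos _)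
  have hpoint : ∀ α, ∑ p : Fin n × Fin n, c p.1 * conj (c p.2) * t p.1 p.2 α = (r α : ℂ) := by
    intro α
    have hfac : ∀ j k, t j k α
        = (∏ l, z j l ^ (α l)) * conj (∏ l, z k l ^ (α l)) * ((w α : ℂ))⁻¹ := by
      intro j k
      simp only [ht, hw, map_prod, map_pow]
      push_cast
      rw [← Finset.prod_inv_distrib, ← Finset.prod_mul_distrib, ← Finset.prod_mul_distrib]
      exact Finset.prod_congr rfl fun l _ => by rw [mul_pow]; ring
    calc ∑ p : Fin n × Fin n, c p.1 * conj (c p.2) * t p.1 p.2 α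
        = (∑ j, c j * ∏ l, z j l ^ (α l)) * conj (∑ k, c k * ∏ l, z k l ^ (α l))
          * ((w α : ℂ))⁻¹ := by
          rw [map_sum, Finset.sum_mul_sum, Finset.sum_mul, Fintype.sum_prod_type]
          refine Finset.sum_congr rfl fun j _ => ?_
          rw [Finset.sum_mul]
          refine Finset.sum_congr rfl fun k _ => ?_
          rw [hfac j k, map_mul]
          ring
      _ = (r α : ℂ) := by
          show (b α) * conj (b α) * ((w α : ℂ))⁻¹ = (r α : ℂ)
          rw [Complex.mul_conj]
          simp only [hr]
          push_cast
          rw [div_eq_mul_inv]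
  have hsummand : ∀ p : Fin n × Fin n,
      Summable fun α => c p.1 * conj (c p.2) * t p.1 p.2 α :=
    fun p => ((htsummable p.1 p.2).of_norm).mul_left _
  have hrsummC : Summable fun α => (r α : ℂ) := by
    refine Summable.congr (f := fun α => ∑ p : Fin n × Fin n, c p.1 * conj (c p.2) * t p.1 p.2 α)
      ?_ hpoint
    exact summable_sum fun p _ => hsummand p
  have hrsumm : Summable r := Complex.summable_ofReal.mp hrsummC
  have hQ : ∑ p : Fin n × Fin n, c p.1 * conj (c p.2)
      * Complex.exp (∑ l, z p.1 l * conj (z p.2 l)) = 0 := by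
    rw [Fintype.sum_prod_type]
    refine Finset.sum_eq_zero fun j _ => ?_
    have h1 : ∑ k, Complex.exp (∑ l, z j l * conj (z k l)) * v k = 0 := by
      have h2 := congrFun hMv j
      simpa [Matrix.mulVec, dotProduct] using h2
    calc ∑ k, c j * conj (c k) * Complex.exp (∑ l, z j l * conj (z k l))
        = c j * ∑ k, Complex.exp (∑ l, z j l * conj (z k l)) * v k := by
          rw [Finset.mul_sum]
          refine Finset.sum_congr rfl fun k _ => ?_
          simp only [hc, Complex.conj_conj]
          ring
      _ = 0 := by rw [h1, mul_zero]
  have htr : ∑' α, r α = 0 := by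
    have h3 : (((∑' α, r α : ℝ)) : ℂ) = 0 := by
      rw [Complex.ofReal_tsum, ← tsum_congr hpoint, Summable.tsum_finsetSum fun p _ => hsummand p, ← hQ]
      refine Finset.sum_congr rfl fun p _ => ?_
      rw [tsum_mul_left, ← hexp p.1 p.2]
    exact_mod_cast h3
  have hball : ∀ α : Fin m → ℕ, ∑ j, c j * ∏ l, z j l ^ α l = 0 := by
    intro α
    have hle : r α ≤ 0 := htr ▸ Summable.le_tsum hrsumm α
      (fun b' _ => div_nonneg (Complex.normSq_nonneg _) (hwpos b').le)
    have hge : 0 ≤ r α := div_nonneg (Complex.normSq_nonneg _) (hwpos α).le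
    have hn0 : Complex.normSq (b α) = 0 := by
      have h4 : r α = 0 := le_antisymm hle hge
      rw [hr] at h4
      exact (div_eq_zero_iff.mp h4).resolve_right (hwpos α).ne'
    have hbz : b α = 0 := Complex.normSq_eq_zero.mp hn0
    simpa [hb] using hbz
  have hcz := sep z hz c hball
  funext j
  have hcj := congrFun hcz j
  simp only [hc, Pi.zero_apply] at hcj
  simpa using congrArg conj hcj

lemma half_prod (nn : ℕ) (S : Fin nn → ℝ) :
    Complex.exp (∑ j, -(S j : ℂ) / 2) * Complex.exp (∑ j, -(S j : ℂ) / 2)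
      = ((Real.exp (-∑ j, S j) : ℝ) : ℂ) := by
  rw [← Complex.exp_add, ← Finset.sum_add_distrib, Complex.ofReal_exp]
  congr 1
  push_cast
  rw [← Finset.sum_neg_distrib]
  exact Finset.sum_congr rfl fun x _ => by ring

lemma entry_eq (Sj Sk : ℝ) (a : ℂ) (T : ℝ) (hT : T = Sj + Sk - 2 * a.re) :
    Complex.exp (Complex.I * (a.im : ℝ) - (1 / 2 : ℂ) * (T : ℝ))
      = Complex.exp (-(Sj : ℂ) / 2) * Complex.exp a * Complex.exp (-(Sk : ℂ) / 2) := by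
  rw [← Complex.exp_add, ← Complex.exp_add]
  congr 1
  rw [hT]
  push_cast
  linear_combination Complex.re_add_im a

end ScaledGram

theorem scaled_gram_det (n m : ℕ) (z : Fin n → (Fin m → ℂ))
    (hz : Function.Injective z) :
    (Matrix.of fun j k : Fin n =>
        Complex.exp (Complex.I * ((∑ l, z j l * conj (z k l)).im : ℝ)
          - (1 / 2 : ℂ) * (∑ l, ‖z j l - z k l‖ ^ 2 : ℝ))).det
      = Real.exp (-∑ j, ∑ l, ‖z j l‖ ^ 2) *
        (Matrix.of fun j k : Fin n =>
          Complex.exp (∑ l, z j l * conj (z k l))).det ∧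
    (Matrix.of fun j k : Fin n =>
        Complex.exp (Complex.I * ((∑ l, z j l * conj (z k l)).im : ℝ)
          - (1 / 2 : ℂ) * (∑ l, ‖z j l - z k l‖ ^ 2 : ℝ))).det ≠ 0 := by
  have hmat : (Matrix.of fun j k : Fin n =>
      Complex.exp (Complex.I * ((∑ l, z j l * conj (z k l)).im : ℝ)
        - (1 / 2 : ℂ) * (∑ l, ‖z j l - z k l‖ ^ 2 : ℝ)))
      = Matrix.diagonal (fun j => Complex.exp (-((∑ l, ‖z j l‖ ^ 2 : ℝ) : ℂ) / 2))
        * (Matrix.of fun j k : Fin n => Complex.exp (∑ l, z j l * conj (z k l)))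
        * Matrix.diagonal (fun j =>
            Complex.exp (-((∑ l, ‖z j l‖ ^ 2 : ℝ) : ℂ) / 2)) := by
    ext j k
    rw [Matrix.mul_diagonal, Matrix.diagonal_mul]
    simp only [Matrix.of_apply]
    refine ScaledGram.entry_eq _ _ _ _ ?_
    have hl : ∀ l : Fin m, ‖z j l - z k l‖ ^ 2
        = ‖z j l‖ ^ 2 + ‖z k l‖ ^ 2
          - 2 * (z j l * conj (z k l)).re := fun l => by
      rw [Complex.sq_norm, Complex.sq_norm, Complex.sq_norm, Complex.normSq_sub]
    rw [Finset.sum_congr rfl fun l _ => hl l, Complex.re_sum]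
    rw [Finset.sum_sub_distrib, Finset.sum_add_distrib, Finset.mul_sum]
  have hdet1 : (Matrix.of fun j k : Fin n =>
      Complex.exp (Complex.I * ((∑ l, z j l * conj (z k l)).im : ℝ)
        - (1 / 2 : ℂ) * (∑ l, ‖z j l - z k l‖ ^ 2 : ℝ))).det
      = Real.exp (-∑ j, ∑ l, ‖z j l‖ ^ 2) *
        (Matrix.of fun j k : Fin n =>
          Complex.exp (∑ l, z j l * conj (z k l))).det := by
    rw [hmat, Matrix.det_mul, Matrix.det_mul, Matrix.det_diagonal]
    rw [show (∏ j, Complex.exp (-((∑ l, ‖z j l‖ ^ 2 : ℝ) : ℂ) / 2))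
        = Complex.exp (∑ j, -((∑ l, ‖z j l‖ ^ 2 : ℝ) : ℂ) / 2) from
      (Complex.exp_sum _ _).symm]
    calc Complex.exp (∑ j, -((∑ l, ‖z j l‖ ^ 2 : ℝ) : ℂ) / 2)
          * (Matrix.of fun j k : Fin n => Complex.exp (∑ l, z j l * conj (z k l))).det
          * Complex.exp (∑ j, -((∑ l, ‖z j l‖ ^ 2 : ℝ) : ℂ) / 2)
        = (Complex.exp (∑ j, -((∑ l, ‖z j l‖ ^ 2 : ℝ) : ℂ) / 2)
            * Complex.exp (∑ j, -((∑ l, ‖z j l‖ ^ 2 : ℝ) : ℂ) / 2))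
          * (Matrix.of fun j k : Fin n => Complex.exp (∑ l, z j l * conj (z k l))).det := by
          ring
      _ = Real.exp (-∑ j, ∑ l, ‖z j l‖ ^ 2) *
          (Matrix.of fun j k : Fin n =>
            Complex.exp (∑ l, z j l * conj (z k l))).det := by
          rw [ScaledGram.half_prod n (fun j => ∑ l, ‖z j l‖ ^ 2)]
  exact ⟨hdet1, hdet1 ▸ mul_ne_zero (Complex.ofReal_ne_zero.mpr (Real.exp_ne_zero _))
    (ScaledGram.gram_det_ne_zero z hz)⟩
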